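/- Let v₀ : [0,∞) → ℝ³ be a smooth function with |v₀(s)| = 1 for all s ≥ 0 that satisfies the compatibility condition (A)_n for some n ∈ ℕ, i.e., v₀(0) = e₃ and v₀(0) × (∂_s^{2k} v₀)(0) = 0 for 1 ≤ k ≤ n. Then for every integer m with 0 ≤ m ≤ n and every pair of nonnegative integers j, l with j + l = 2m + 1, one has (∂_s^j v₀)(0) · (∂_s^l v₀)(0) = 0. -/

import Mathlib

open scoped InnerProductSpace

noncomputable section

/-- ℝ³ with the Euclidean norm and inner product. -/
abbrev E3 := EuclideanSpace ℝ (Fin 3)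

/-- The cross product on ℝ³. -/
def cross (a b : E3) : E3 :=
  !₂[a 1 * b 2 - a 2 * b 1, a 2 * b 0 - a 0 * b 2, a 0 * b 1 - a 1 * b 0]

/-- The vector e₃ = (0,0,1). -/
def e₃ : E3 := !₂[0, 0, 1]

/-- The reflection w̄ = (w¹, w², −w³). -/
def bar (w : E3) : E3 := !₂[w 0, w 1, -(w 2)]

lemma aux_smooth {v : ℝ → E3} (h : ContDiff ℝ (⊤ : ℕ∞) v) (j : ℕ) :
    ContDiff ℝ (⊤ : ℕ∞) (iteratedDeriv j v) := by
  rw [iteratedDeriv_eq_iterate]; exact ContDiff.iterate_deriv j (h.of_le (by simp))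

lemma aux_diff {v : ℝ → E3} (h : ContDiff ℝ (⊤ : ℕ∞) v) (j : ℕ) {x : ℝ} :
    DifferentiableAt ℝ (iteratedDeriv j v) x :=
  ((aux_smooth h j).differentiable (by simp)).differentiableAt

lemma aux_deriv_inner {v : ℝ → E3} (h : ContDiff ℝ (⊤ : ℕ∞) v) (j l : ℕ) :
    deriv (fun s => ⟪iteratedDeriv j v s, iteratedDeriv l v s⟫_ℝ) =
      fun s => ⟪iteratedDeriv (j + 1) v s, iteratedDeriv l v s⟫_ℝ
        + ⟪iteratedDeriv j v s, iteratedDeriv (l + 1) v s⟫_ℝ := by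
  funext s
  rw [deriv_inner_apply ℝ (aux_diff h j) (aux_diff h l), iteratedDeriv_succ, iteratedDeriv_succ]
  ring

lemma aux_leibniz {v : ℝ → E3} (h : ContDiff ℝ (⊤ : ℕ∞) v) (N : ℕ) :
    iteratedDeriv N (fun s => ⟪v s, v s⟫_ℝ) =
      fun s => ∑ i ∈ Finset.range (N + 1),
        (N.choose i : ℝ) * ⟪iteratedDeriv i v s, iteratedDeriv (N - i) v s⟫_ℝ := by
  induction N with
  | zero => simp [iteratedDeriv_zero]
  | succ N IH =>
      rw [iteratedDeriv_succ, IH]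
      funext s
      have hdiff : ∀ i ∈ Finset.range (N + 1), DifferentiableAt ℝ
          (fun t => (N.choose i : ℝ) * ⟪iteratedDeriv i v t, iteratedDeriv (N - i) v t⟫_ℝ) s :=
        fun i _ => (((aux_diff h i).inner ℝ (aux_diff h (N - i)))).const_mul _
      rw [deriv_fun_sum hdiff]
      rw [Finset.sum_choose_succ_mul
        (fun i j => ⟪iteratedDeriv i v s, iteratedDeriv j v s⟫_ℝ) N]
      rw [← Finset.sum_add_distrib]
      refine Finset.sum_congr rfl fun i hi => ?_
      have hi' : i ≤ N := Nat.lt_succ_iff.mp (Finset.mem_range.mp hi)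
      rw [deriv_const_mul _ ((aux_diff h i).inner ℝ (aux_diff h (N - i)))]
      rw [congrFun (aux_deriv_inner h i (N - i)) s]
      have h1 : N + 1 - i = (N - i) + 1 := by omega
      rw [h1]
      ring

lemma aux_const_deriv (c : ℝ) : ∀ N : ℕ, iteratedDeriv (N + 1) (fun _ : ℝ => c) = fun _ => 0 := by
  have hz : ∀ N : ℕ, iteratedDeriv N (fun _ : ℝ => (0 : ℝ)) = fun _ => 0 := by
    intro N
    induction N with
    | zero => simp [iteratedDeriv_zero]
    | succ N IH => rw [iteratedDeriv_succ', deriv_const']; exact IH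
  intro N
  rw [iteratedDeriv_succ', deriv_const']
  exact hz N

lemma aux_parallel (w u : E3) (h : cross e₃ w = 0) : ⟪w, u⟫_ℝ = w 2 * ⟪e₃, u⟫_ℝ := by
  have h1 := congrArg (fun x : E3 => x 1) h
  have h0 := congrArg (fun x : E3 => x 0) h
  simp [cross, e₃] at h0 h1
  simp [PiLp.inner_apply, Fin.sum_univ_three, h0, h1, e₃, RCLike.inner_apply, mul_comm]

/-- If a smooth unit vector field `v₀` on `[0,∞)` satisfies the
compatibility condition `(A)ₙ` (`v₀(0) = e₃` and `v₀(0) × ∂ₛ^{2k} v₀(0) = 0` for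
`1 ≤ k ≤ n`), then `∂ₛʲ v₀(0) · ∂ₛˡ v₀(0) = 0` whenever `j + l = 2m + 1` with
`0 ≤ m ≤ n`. -/
theorem compatibility_A_implies_D
    (n : ℕ) (v₀ : ℝ → E3)
    (hsmooth : ContDiff ℝ (⊤ : ℕ∞) v₀)
    (hunit : ∀ s : ℝ, 0 ≤ s → ‖v₀ s‖ = 1)
    (hA0 : v₀ 0 = e₃)
    (hA : ∀ k : ℕ, 1 ≤ k → k ≤ n → cross (v₀ 0) (iteratedDeriv (2 * k) v₀ 0) = 0) :
    ∀ m : ℕ, m ≤ n → ∀ j l : ℕ, j + l = 2 * m + 1 →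
      ⟪iteratedDeriv j v₀ 0, iteratedDeriv l v₀ 0⟫_ℝ = 0 := by
  -- the squared norm function
  set g : ℝ → ℝ := fun s => ⟪v₀ s, v₀ s⟫_ℝ with hg
  -- all derivatives of g of positive order vanish at 0
  have hgval : ∀ s : ℝ, 0 < s → g s = 1 := by
    intro s hs
    have := hunit s hs.le
    rw [hg]
    simp only
    rw [real_inner_self_eq_norm_mul_norm, this]; norm_num
  have hvanish : ∀ N : ℕ, iteratedDeriv (N + 1) g 0 = 0 := by
    intro N
    set h : ℝ → ℝ := iteratedDeriv (N + 1) g with hh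
    have hcont : Continuous h := by
      rw [hh, iteratedDeriv_eq_iterate]
      exact (ContDiff.iterate_deriv (N + 1)
        (((hsmooth.inner ℝ hsmooth).of_le (by simp)))).continuous
    have hsub : Set.Ioi (0 : ℝ) ⊆ h ⁻¹' {0} := by
      intro s hs
      have heq : g =ᶠ[nhds s] fun _ => (1 : ℝ) := by
        filter_upwards [IsOpen.mem_nhds isOpen_Ioi hs] with t ht
        exact hgval t ht
      have heq2 : h s = iteratedDeriv (N + 1) (fun _ : ℝ => (1 : ℝ)) s :=
        heq.iteratedDeriv_eq (N + 1)
      simp only [Set.mem_preimage, Set.mem_singleton_iff]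
      rw [heq2, aux_const_deriv 1 N]
    have hclosed : IsClosed (h ⁻¹' {0}) := isClosed_singleton.preimage hcont
    have : Set.Ici (0 : ℝ) ⊆ h ⁻¹' {0} := by
      rw [← closure_Ioi]
      exact closure_minimal hsub hclosed
    exact this Set.self_mem_Ici
  -- even derivatives of order 2k (1 ≤ k ≤ n) are parallel to e₃
  have hpar : ∀ k : ℕ, 1 ≤ k → k ≤ n → ∀ u : E3,
      ⟪iteratedDeriv (2 * k) v₀ 0, u⟫_ℝ =
        (iteratedDeriv (2 * k) v₀ 0) 2 * ⟪e₃, u⟫_ℝ := by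
    intro k h1 h2 u
    have := hA k h1 h2
    rw [hA0] at this
    exact aux_parallel _ u this
  -- main induction
  intro m
  induction m using Nat.strong_induction_on with
  | _ m IH =>
    intro hmn j l hjl
    -- helper: even-index (≥ 2) against odd-index with smaller "m"
    have heven : ∀ a b : ℕ, 1 ≤ a → a ≤ n → b < m →
        ⟪iteratedDeriv (2 * a) v₀ 0, iteratedDeriv (2 * b + 1) v₀ 0⟫_ℝ = 0 := by
      intro a b ha han hbm
      rw [hpar a ha han]
      have : ⟪e₃, iteratedDeriv (2 * b + 1) v₀ 0⟫_ℝ = 0 := by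
        have := IH b hbm (le_trans (le_of_lt hbm) hmn) 0 (2 * b + 1) (by omega)
        rwa [iteratedDeriv_zero, hA0] at this
      rw [this, mul_zero]
    -- middle terms of the Leibniz sum vanish
    have hmid : ∀ i : ℕ, 1 ≤ i → i ≤ 2 * m →
        ⟪iteratedDeriv i v₀ 0, iteratedDeriv (2 * m + 1 - i) v₀ 0⟫_ℝ = 0 := by
      intro i h1 h2
      rcases Nat.even_or_odd i with ⟨a, hae⟩ | ⟨b, hbo⟩
      · have ha1 : 1 ≤ a := by omega
        have ham : a ≤ m := by omega
        have : 2 * m + 1 - i = 2 * (m - a) + 1 := by omega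
        rw [this, hae, show a + a = 2 * a by ring]
        exact heven a (m - a) ha1 (le_trans ham hmn) (by omega)
      · have hbm : b < m := by omega
        have ha' : 1 ≤ m - b := by omega
        have : 2 * m + 1 - i = 2 * (m - b) := by omega
        rw [this, hbo, real_inner_comm]
        exact heven (m - b) b ha' (le_trans (by omega : m - b ≤ m) hmn) hbm
    -- key : ⟪v₀ 0, ∂^{2m+1} v₀ 0⟫ = 0
    have hsum := hvanish (2 * m)
    rw [show 2 * m + 1 = (2 * m) + 1 from rfl] at hsum
    rw [congrFun (aux_leibniz hsmooth (2 * m + 1)) 0] at hsum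
    have key : ⟪iteratedDeriv 0 v₀ 0, iteratedDeriv (2 * m + 1) v₀ 0⟫_ℝ = 0 := by
      rw [Finset.sum_range_succ] at hsum
      have hlast : ((2 * m + 1).choose (2 * m + 1) : ℝ) *
          ⟪iteratedDeriv (2 * m + 1) v₀ 0, iteratedDeriv (2 * m + 1 - (2 * m + 1)) v₀ 0⟫_ℝ =
          ⟪iteratedDeriv 0 v₀ 0, iteratedDeriv (2 * m + 1) v₀ 0⟫_ℝ := by
        rw [Nat.choose_self, Nat.sub_self, real_inner_comm]
        push_cast; ring
      rw [hlast] at hsum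
      have hrest : ∑ i ∈ Finset.range (2 * m + 1), ((2 * m + 1).choose i : ℝ) *
          ⟪iteratedDeriv i v₀ 0, iteratedDeriv (2 * m + 1 - i) v₀ 0⟫_ℝ =
          ⟪iteratedDeriv 0 v₀ 0, iteratedDeriv (2 * m + 1) v₀ 0⟫_ℝ := by
        rw [Finset.sum_eq_single_of_mem 0 (Finset.mem_range.mpr (by omega))]
        · rw [Nat.choose_zero_right, Nat.sub_zero]; push_cast; ring
        · intro i hi hi0
          have hi' := Finset.mem_range.mp hi
          rw [hmid i (by omega) (by omega), mul_zero]
      rw [hrest] at hsum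
      linarith
    -- finish: split by parity of j
    have final : ∀ j' l' : ℕ, j' + l' = 2 * m + 1 → Even j' →
        ⟪iteratedDeriv j' v₀ 0, iteratedDeriv l' v₀ 0⟫_ℝ = 0 := by
      rintro j' l' hjl' ⟨a, hae⟩
      rcases Nat.eq_zero_or_pos a with rfl | ha
      · have hj0 : j' = 0 := by omega
        have hl' : l' = 2 * m + 1 := by omega
        rw [hj0, hl']; exact key
      · have hj' : j' = 2 * a := by omega
        have hl' : l' = 2 * (m - a) + 1 := by omega
        rw [hj', hl']
        exact heven a (m - a) ha (le_trans (by omega : a ≤ m) hmn) (by omega)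
    rcases Nat.even_or_odd j with hje | hjo
    · exact final j l hjl hje
    · have hle : Even l := by rcases hjo with ⟨b, hb⟩; exact ⟨(m - b), by omega⟩
      rw [real_inner_comm]
      exact final l j (by omega) hle
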